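/- For all p, ω ∈ ℂ, the families (I_{exp(p/2^m)}(ω))_{m≥1} and (I_{exp(ω/2^m)}(p))_{m≥1} are multipliable and ∏_{m=1}^∞ I_{exp(p/2^m)}(ω) = ∏_{m=1}^∞ I_{exp(ω/2^m)}(p), where exp denotes the complex exponential. -/

import Mathlib

/-- For `p, ω ∈ ℂ`, the entire function
`I_p(ω) = ∏_{n=1}^∞ (p + (1-p) e^{ω/2^n})` (index `n : ℕ` stands for `n+1 ≥ 1`). -/
noncomputable def Iprod (p ω : ℂ) : ℂ :=
  ∏' n : ℕ, (p + (1 - p) * Complex.exp (ω / 2 ^ (n + 1)))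

/-!
Writing `p + (1 - p) e = 1 - (p - 1)(e - 1)`, the `(m, n)` factor of the double product
`∏_m I_{exp(p/2^m)}(ω)` is `1 - (e^{p/2^m} - 1)(e^{ω/2^n} - 1)`, which is symmetric under
exchanging `(p, m)` with `(ω, n)`. Both differences are `O(2^{-m})` resp. `O(2^{-n})`, so the
double product converges absolutely and may be evaluated in either order.
-/

open Complex

section OneSubMul

variable {R : Type*} [NormedCommRing R] [NormOneClass R] [CompleteSpace R] {ι κ : Type*}

theorem multipliable_one_sub_of_summable_norm {f : ι → R} (hf : Summable (‖f ·‖)) :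
    Multipliable (1 - f ·) := by
  simpa only [sub_eq_add_neg] using multipliable_one_add_of_summable (f := (-f ·)) (by simpa)

variable {a : ι → R} {b : κ → R}

theorem multipliable_one_sub_mul_prod (ha : Summable (‖a ·‖)) (hb : Summable (‖b ·‖)) :
    Multipliable fun x : ι × κ => 1 - a x.1 * b x.2 :=
  multipliable_one_sub_of_summable_norm <|
    (ha.mul_of_nonneg hb (fun _ => norm_nonneg _) (fun _ => norm_nonneg _)).of_nonneg_of_le
      (fun _ => norm_nonneg _) fun _ => norm_mul_le _ _

theorem multipliable_one_sub_const_mul (c : R) (hb : Summable (‖b ·‖)) :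
    Multipliable fun j => 1 - c * b j :=
  multipliable_one_sub_of_summable_norm <|
    (hb.mul_left ‖c‖).of_nonneg_of_le (fun _ => norm_nonneg _) fun _ => norm_mul_le _ _

theorem multipliable_tprod_one_sub_mul (ha : Summable (‖a ·‖)) (hb : Summable (‖b ·‖)) :
    Multipliable fun i => ∏' j, (1 - a i * b j) :=
  ((multipliable_one_sub_mul_prod ha hb).hasProd.prod_fiberwise
    fun i => (multipliable_one_sub_const_mul (a i) hb).hasProd).multipliable

theorem tprod_tprod_one_sub_mul_comm (ha : Summable (‖a ·‖)) (hb : Summable (‖b ·‖)) :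
    ∏' i, ∏' j, (1 - a i * b j) = ∏' j, ∏' i, (1 - b j * a i) := by
  have hcol (j : κ) : Multipliable fun i => 1 - a i * b j := by
    simpa only [mul_comm (b j)] using multipliable_one_sub_const_mul (b j) ha
  have h := (multipliable_one_sub_mul_prod ha hb).tprod_comm' (f := fun i j => 1 - a i * b j)
    (fun i => multipliable_one_sub_const_mul (a i) hb) hcol
  simpa only [mul_comm (b _)] using h.symm

end OneSubMul

theorem summable_norm_cexp_sub_one {ι : Type*} {f : ι → ℂ} (hf : Summable (‖f ·‖)) :
    Summable fun i => ‖cexp (f i) - 1‖ :=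
  (hf.mul_left 2).of_norm_bounded_eventually <| by
    filter_upwards [hf.tendsto_cofinite_zero.eventually_le_const one_pos] with i hi
    simpa using norm_exp_sub_one_le hi

theorem summable_norm_div_two_pow_succ (z : ℂ) : Summable fun n : ℕ => ‖z / 2 ^ (n + 1)‖ := by
  refine (summable_geometric_two.mul_left (‖z‖ / 2)).congr fun n => ?_
  simp only [one_div, inv_pow, pow_succ, norm_div, norm_mul, norm_pow, norm_ofNat]
  ring

theorem Iprod_eq_tprod_one_sub_mul (p ω : ℂ) :
    Iprod p ω = ∏' n : ℕ, (1 - (p - 1) * (cexp (ω / 2 ^ (n + 1)) - 1)) :=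
  tprod_congr fun _ => by ring

/-- For all `p, ω ∈ ℂ`, the families `(I_{exp(p/2^m)}(ω))_{m ≥ 1}` and
`(I_{exp(ω/2^m)}(p))_{m ≥ 1}` are multipliable and
`∏_{m=1}^∞ I_{exp(p/2^m)}(ω) = ∏_{m=1}^∞ I_{exp(ω/2^m)}(p)`
(index `m : ℕ` stands for `m+1 ≥ 1`). -/
theorem stmt11 (p ω : ℂ) :
    Multipliable (fun m : ℕ => Iprod (Complex.exp (p / 2 ^ (m + 1))) ω) ∧
      Multipliable (fun m : ℕ => Iprod (Complex.exp (ω / 2 ^ (m + 1))) p) ∧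
        ∏' m : ℕ, Iprod (Complex.exp (p / 2 ^ (m + 1))) ω =
          ∏' m : ℕ, Iprod (Complex.exp (ω / 2 ^ (m + 1))) p := by
  have hp := summable_norm_cexp_sub_one (summable_norm_div_two_pow_succ p)
  have hω := summable_norm_cexp_sub_one (summable_norm_div_two_pow_succ ω)
  simp only [Iprod_eq_tprod_one_sub_mul]
  exact ⟨multipliable_tprod_one_sub_mul hp hω, multipliable_tprod_one_sub_mul hω hp,
    tprod_tprod_one_sub_mul_comm hp hω⟩
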